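/- For every prime p, the number 2p is a GA1 number if and only if p = 2 or p > 5. Equivalently: G(2p) ≥ G(p) and G(2p) ≥ G(2) hold iff p = 2 or p ≥ 7. -/
import Mathlib


noncomputable def G (n : ℕ) : ℝ := (ArithmeticFunction.sigma 1 n : ℝ) / (n * Real.log (Real.log n))

def GA1 (n : ℕ) : Prop :=
  (1 < n ∧ ¬ n.Prime) ∧ ∀ p : ℕ, p.Prime → p ∣ n → G (n / p) ≤ G n

lemma exp_le_inv' (x : ℝ) (hx : 0 ≤ x) (hx1 : x < 1) : Real.exp x ≤ 1/(1-x) := by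
  have h := Real.add_one_le_exp (-x)
  have e : Real.exp x * Real.exp (-x) = 1 := by rw [← Real.exp_add]; norm_num
  rw [le_div_iff₀ (by linarith)]
  nlinarith [Real.exp_pos x, Real.exp_pos (-x)]

lemma log_seven_gt' : (1.88:ℝ) < Real.log 7 := by
  rw [show (1.88:ℝ) = Real.log (Real.exp 1.88) from (Real.log_exp _).symm]
  apply Real.log_lt_log (Real.exp_pos _)
  have h1 : Real.exp (0.11:ℝ) ≤ 1/0.89 := by
    have := exp_le_inv' 0.11 (by norm_num) (by norm_num); norm_num at this ⊢; linarith
  have e1 : Real.exp (1.88:ℝ) = Real.exp 1 * Real.exp (0.11:ℝ) ^ (8:ℕ) := by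
    rw [← Real.exp_nat_mul, ← Real.exp_add]; norm_num
  have h2 : Real.exp (0.11:ℝ) ^ (8:ℕ) ≤ (1/0.89:ℝ)^(8:ℕ) :=
    pow_le_pow_left₀ (Real.exp_pos _).le h1 8
  have h3 := Real.exp_one_lt_d9
  rw [e1]
  calc Real.exp 1 * Real.exp (0.11:ℝ)^(8:ℕ) ≤ Real.exp 1 * (1/0.89:ℝ)^(8:ℕ) :=
        mul_le_mul_of_nonneg_left h2 (Real.exp_pos _).le
    _ < 2.7182818286 * (1/0.89:ℝ)^(8:ℕ) := by
        apply mul_lt_mul_of_pos_right h3; positivity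
    _ < 7 := by norm_num

lemma log_three_gt' : (1:ℝ) < Real.log 3 := by
  rw [show (1:ℝ) = Real.log (Real.exp 1) from (Real.log_exp _).symm]
  exact Real.log_lt_log (Real.exp_pos _) (by nlinarith [Real.exp_one_lt_d9])

lemma log_three_lt' : Real.log 3 < 1.42 := by
  rw [show (1.42:ℝ) = Real.log (Real.exp 1.42) from (Real.log_exp _).symm]
  apply Real.log_lt_log (by norm_num)
  have e1 : Real.exp (1.42:ℝ) = Real.exp (0.355:ℝ) ^ (4:ℕ) := by
    rw [← Real.exp_nat_mul]; norm_num
  have h1 : (1.355:ℝ) ≤ Real.exp 0.355 := by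
    have := Real.add_one_le_exp (0.355:ℝ); linarith
  rw [e1]
  calc (3:ℝ) < 1.355^(4:ℕ) := by norm_num
    _ ≤ Real.exp (0.355:ℝ)^(4:ℕ) := pow_le_pow_left₀ (by norm_num) h1 4

lemma log_five_gt' : (1.38:ℝ) < Real.log 5 := by
  have h4 : Real.log 4 = 2 * Real.log 2 := by
    rw [show (4:ℝ) = 2^(2:ℕ) by norm_num, Real.log_pow]; push_cast; ring
  have := Real.log_lt_log (by norm_num : (0:ℝ) < 4) (by norm_num : (4:ℝ) < 5)
  have := Real.log_two_gt_d9
  linarith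

lemma log_five_lt' : Real.log 5 < 1.62 := by
  rw [show (1.62:ℝ) = Real.log (Real.exp 1.62) from (Real.log_exp _).symm]
  apply Real.log_lt_log (by norm_num)
  have e1 : Real.exp (1.62:ℝ) = Real.exp 1 * Real.exp (0.62:ℝ) := by
    rw [← Real.exp_add]; norm_num
  have h1 : (1.8588:ℝ) ≤ Real.exp 0.62 := by
    have h := Real.sum_le_exp_of_nonneg (by norm_num : (0:ℝ) ≤ 0.62) 6
    simp [Finset.sum_range_succ, Nat.factorial] at h
    norm_num at h; linarith
  have h2 := Real.exp_one_gt_d9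
  rw [e1]; nlinarith [Real.exp_pos (0.62:ℝ)]

lemma log_cmp2' {a b : ℝ} (ha : 0 < a) (h : a^(2:ℕ) < b^(3:ℕ)) :
    2 * Real.log a < 3 * Real.log b := by
  have := Real.log_lt_log (by positivity) h
  rw [Real.log_pow, Real.log_pow] at this
  push_cast at this; linarith

lemma log_cmp' {a b : ℝ} (ha : 0 < a) (h : a^(3:ℕ) < b^(2:ℕ)) :
    3 * Real.log a < 2 * Real.log b := by
  have := Real.log_lt_log (by positivity) h
  rw [Real.log_pow, Real.log_pow] at this
  push_cast at this; linarith

lemma sigma_prime' (p : ℕ) (hp : p.Prime) : (ArithmeticFunction.sigma 1 p : ℕ) = p + 1 := by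
  rw [ArithmeticFunction.sigma_one_apply, hp.divisors, Finset.sum_pair hp.ne_one.symm]
  omega

lemma sigma_two_mul' (p : ℕ) (hp : p.Prime) (hne : p ≠ 2) :
    (ArithmeticFunction.sigma 1 (2*p) : ℕ) = 3 * (p + 1) := by
  have hcop : Nat.Coprime 2 p := (Nat.coprime_primes Nat.prime_two hp).2 (Ne.symm hne)
  rw [ArithmeticFunction.isMultiplicative_sigma.map_mul_of_coprime hcop]
  rw [ArithmeticFunction.sigma_one_apply, ArithmeticFunction.sigma_one_apply, hp.divisors,
    Finset.sum_pair hp.ne_one.symm]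
  have h2 : (Nat.divisors 2) = {1, 2} := Nat.prime_two.divisors
  rw [h2]; simp; ring

lemma G_two_neg' : G 2 < 0 := by
  unfold G
  rw [show (ArithmeticFunction.sigma 1 2 : ℕ) = 3 by
    rw [ArithmeticFunction.sigma_one_apply]; decide]
  have h1 : Real.log (Real.log 2) < 0 :=
    Real.log_neg (by positivity) (by have := Real.log_two_lt_d9; linarith)
  apply div_neg_of_pos_of_neg (by norm_num)
  push_cast
  nlinarith

theorem two_p_GA1_iff (p : ℕ) (hp : p.Prime) :
    GA1 (2 * p) ↔ p = 2 ∨ 5 < p := by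
  have hlog2 := Real.log_two_gt_d9
  have hlog2' := Real.log_two_lt_d9
  by_cases hp2 : p = 2
  · subst hp2
    constructor
    · intro _; exact Or.inl rfl
    · intro _
      have hG4 : 0 < G 4 := by
        unfold G
        rw [show (ArithmeticFunction.sigma 1 4 : ℕ) = 7 by
          rw [ArithmeticFunction.sigma_one_apply]; decide]
        have h4 : Real.log 4 = 2 * Real.log 2 := by
          rw [show (4:ℝ) = 2^(2:ℕ) by norm_num, Real.log_pow]; push_cast; ring
        have : 0 < Real.log (Real.log 4) := Real.log_pos (by rw [h4]; linarith)
        norm_num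
        positivity
      refine ⟨⟨by norm_num, by norm_num⟩, ?_⟩
      intro q hq hdvd
      have hq2 : q = 2 := by
        rcases (Nat.Prime.dvd_mul hq).1 hdvd with h | h <;>
          exact (Nat.prime_dvd_prime_iff_eq hq Nat.prime_two).1 h
      subst hq2
      have : (2*2)/2 = 2 := by norm_num
      rw [this]
      linarith [G_two_neg']
  · -- p odd prime
    have hp3 : 3 ≤ p := by have := hp.two_le; omega
    have hpR : (3:ℝ) ≤ (p:ℝ) := by exact_mod_cast hp3
    have hp0 : (0:ℝ) < (p:ℝ) := by linarith
    have hL1 : 1 < Real.log p :=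
      lt_of_lt_of_le log_three_gt' (Real.log_le_log (by norm_num) (by exact_mod_cast hpR))
    have hlogL : 0 < Real.log (Real.log p) := Real.log_pos hL1
    have hL2 : 1 < Real.log 2 + Real.log p := by linarith
    have hlogL2 : 0 < Real.log (Real.log 2 + Real.log p) := Real.log_pos hL2
    have hlog2p : Real.log ((2*p : ℕ) : ℝ) = Real.log 2 + Real.log p := by
      push_cast
      rw [Real.log_mul (by norm_num) (by positivity)]
    have hGp : G p = ((p:ℝ)+1)/((p:ℝ) * Real.log (Real.log p)) := by
      unfold G; rw [sigma_prime' p hp]; push_cast; ring_nf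
    have hG2p : G (2*p) =
        (3*((p:ℝ)+1))/((2*(p:ℝ)) * Real.log (Real.log 2 + Real.log p)) := by
      unfold G; rw [sigma_two_mul' p hp hp2, hlog2p]; push_cast; ring_nf
    have hG2p_pos : 0 < G (2*p) := by
      rw [hG2p]; positivity
    have hiff1 : GA1 (2*p) ↔ G p ≤ G (2*p) := by
      constructor
      · rintro ⟨-, h⟩
        have := h 2 Nat.prime_two ⟨p, rfl⟩
        rwa [Nat.mul_div_cancel_left p (by norm_num)] at this
      · intro hle
        refine ⟨⟨by omega, Nat.not_prime_mul (by norm_num) hp.ne_one⟩, ?_⟩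
        intro q hq hdvd
        rcases (Nat.Prime.dvd_mul hq).1 hdvd with h | h
        · have hq2 : q = 2 := (Nat.prime_dvd_prime_iff_eq hq Nat.prime_two).1 h
          subst hq2
          rwa [Nat.mul_div_cancel_left p (by norm_num)]
        · have hqp : q = p := (Nat.prime_dvd_prime_iff_eq hq hp).1 h
          subst hqp
          rw [Nat.mul_div_cancel 2 (by omega : 0 < q)]
          linarith [G_two_neg']
    rw [hiff1, hGp, hG2p]
    constructor
    · -- G p ≤ G 2p → 5 < p
      intro h
      by_contra h5
      push_neg at h5
      have h4 : p ≠ 4 := by rintro rfl; norm_num at hp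
      have hcases : p = 3 ∨ p = 5 := by omega
      have hbounds : 1 < Real.log p ∧ Real.log p ≤ 1.62 := by
        rcases hcases with h3 | h5'
        · subst h3; exact ⟨by exact_mod_cast log_three_gt', by
            have := log_three_lt'; push_cast; linarith⟩
        · subst h5'; exact ⟨by push_cast; linarith [log_five_gt'], by
            push_cast; linarith [log_five_lt']⟩
      obtain ⟨hb1, hb2⟩ := hbounds
      have hkey : (Real.log p)^(3:ℕ) < (Real.log 2 + Real.log p)^(2:ℕ) := by
        nlinarith [mul_nonneg (sub_nonneg.2 hb1.le) (sub_nonneg.2 hb2),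
          sq_nonneg (Real.log p - 1), sq_nonneg (Real.log p - 1.62)]
      have hcmp : 3 * Real.log (Real.log p) <
          2 * Real.log (Real.log 2 + Real.log p) := log_cmp' (by linarith) hkey
      rw [div_le_div_iff₀ (by positivity) (by positivity)] at h
      nlinarith [mul_pos hp0 (show (0:ℝ) < (p:ℝ)+1 by linarith)]
    · -- 5 < p → G p ≤ G 2p
      intro h5
      have h6 : p ≠ 6 := by rintro rfl; norm_num at hp
      have hp7 : 7 ≤ p := by omega
      have hL7 : 1.88 < Real.log p :=
        lt_of_lt_of_le log_seven_gt' (Real.log_le_log (by norm_num) (by exact_mod_cast hp7))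
      have hkey : (Real.log 2 + Real.log p)^(2:ℕ) < (Real.log p)^(3:ℕ) := by
        nlinarith [sq_nonneg (Real.log p - 1.88),
          mul_nonneg (mul_nonneg (sub_nonneg.2 hL7.le) (sub_nonneg.2 hL7.le)) (sub_nonneg.2 hL7.le),
          mul_nonneg (sub_nonneg.2 hL7.le) (show (0:ℝ) ≤ 0.6931471808 - Real.log 2 by linarith)]
      have hcmp : 2 * Real.log (Real.log 2 + Real.log p) <
          3 * Real.log (Real.log p) := log_cmp2' (by linarith) hkey
      rw [div_le_div_iff₀ (by positivity) (by positivity)]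
      nlinarith [mul_pos hp0 (show (0:ℝ) < (p:ℝ)+1 by linarith)]
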